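/- Let π^1,…,π^N ∈ ℝ^{n×n} be entrywise nonnegative matrices and let b ∈ ℝ^n with b_j > 0 for all j and Σ_{j=1}^n b_j = Σ_{k=1}^N Σ_{i,j} π^k_{ij}. Set a^k := r(π^k) for each k. Then there exist vectors b^1,…,b^N ∈ ℝ^n satisfying: (i) b^k_j ≥ 0 for all k, j; (ii) Σ_{k=1}^N b^k = b; (iii) Σ_{j=1}^n b^k_j = Σ_{i=1}^n a^k_i for every k; (iv) for every fixed j and all k, k', (b^k_j − c(π^k)_j)(b^{k'}_j − c(π^{k'})_j) ≥ 0. Moreover, properties (ii) and (iv) imply Σ_{k=1}^N ‖b^k − c(π^k)‖_1 = ‖b − c(Σ_{k=1}^N π^k)‖_1. -/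

import Mathlib

open scoped BigOperators

noncomputable section

namespace EOT

/-- Square matrices as functions. -/
abbrev Mat (n : ℕ) := Fin n → Fin n → ℝ

/-- Frobenius inner product ⟨A, B⟩ = Σ_{i,j} A_{ij} B_{ij}. -/
def frob {n : ℕ} (A B : Mat n) : ℝ := ∑ i, ∑ j, A i j * B i j

/-- Row-sum vector r(A) = A 𝟙. -/
def rowSum {n : ℕ} (A : Mat n) : Fin n → ℝ := fun i => ∑ j, A i j

/-- Column-sum vector c(A) = Aᵀ 𝟙. -/
def colSum {n : ℕ} (A : Mat n) : Fin n → ℝ := fun j => ∑ i, A i j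

/-- Entrywise ℓ₁ norm of a matrix. -/
def mnorm1 {n : ℕ} (A : Mat n) : ℝ := ∑ i, ∑ j, |A i j|

/-- ℓ₁ norm of a vector. -/
def vnorm1 {m : ℕ} (v : Fin m → ℝ) : ℝ := ∑ i, |v i|

/-- Euclidean (ℓ₂) norm of a vector. -/
def vnorm2 {m : ℕ} (v : Fin m → ℝ) : ℝ := Real.sqrt (∑ i, v i ^ 2)

/-- c_∞ := max_{k,i,j} |C^k_{ij}|. -/
def cinf {n N : ℕ} (C : Fin N → Mat n) : ℝ := ⨆ k, ⨆ i, ⨆ j, |C k i j|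

/-- ι := min_j log b_j. -/
def iotaMin {n : ℕ} (b : Fin n → ℝ) : ℝ := ⨅ j, Real.log (b j)

/-- ζ^k(f,g,λ)_{ij} = exp((f_i + g_j − λ_k C^k_{ij})/η). -/
def zeta {n N : ℕ} (η : ℝ) (C : Fin N → Mat n) (f g : Fin n → ℝ)
    (lam : Fin N → ℝ) (k : Fin N) : Mat n :=
  fun i j => Real.exp ((f i + g j - lam k * C k i j) / η)

/-- π^k(f,g,λ) = ζ^k(f,g,λ) / Σ_{k'} ‖ζ^{k'}(f,g,λ)‖₁. -/
def piMat {n N : ℕ} (η : ℝ) (C : Fin N → Mat n) (f g : Fin n → ℝ)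
    (lam : Fin N → ℝ) (k : Fin N) : Mat n :=
  fun i j => zeta η C f g lam k i j / ∑ k', mnorm1 (zeta η C f g lam k')

/-- The dual objective F(f,g,λ) = ⟨f,a⟩ + ⟨g,b⟩ − η log(Σ_k ‖ζ^k‖₁) − η. -/
def Fdual {n N : ℕ} (η : ℝ) (C : Fin N → Mat n) (a b : Fin n → ℝ)
    (f g : Fin n → ℝ) (lam : Fin N → ℝ) : ℝ :=
  (∑ i, f i * a i) + (∑ j, g j * b j)
    - η * Real.log (∑ k, mnorm1 (zeta η C f g lam k)) - η

/-- Gradient of F with respect to λ: (∇_λ F)_k = ⟨π^k(f,g,λ), C^k⟩. -/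
def gradLam {n N : ℕ} (η : ℝ) (C : Fin N → Mat n) (f g : Fin n → ℝ)
    (lam : Fin N → ℝ) : Fin N → ℝ :=
  fun k => frob (piMat η C f g lam k) (C k)

/-- `p` is the Euclidean projection of `x` onto the probability simplex. -/
def IsProjSimplex {m : ℕ} (p x : Fin m → ℝ) : Prop :=
  p ∈ stdSimplex ℝ (Fin m) ∧
    ∀ q ∈ stdSimplex ℝ (Fin m),
      vnorm2 (fun k => p k - x k) ≤ vnorm2 (fun k => q k - x k)

/-- Kullback–Leibler divergence KL(v‖w) = Σ_j v_j log(v_j / w_j). -/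
def klVec {m : ℕ} (v w : Fin m → ℝ) : ℝ := ∑ j, v j * Real.log (v j / w j)

/-- The Hamiltonian E(f,g,λ¹,λ²) = F(f,g,λ¹) − (1/(2τ))‖λ¹ − λ²‖₂². -/
def ham {n N : ℕ} (η : ℝ) (C : Fin N → Mat n) (a b : Fin n → ℝ) (τ : ℝ)
    (f g : Fin n → ℝ) (l1 l2 : Fin N → ℝ) : ℝ :=
  Fdual η C a b f g l1 - 1 / (2 * τ) * vnorm2 (fun k => l1 k - l2 k) ^ 2

/-- The rounding procedure Round(A, a, b). -/
def roundMat {n : ℕ} (A : Mat n) (a b : Fin n → ℝ) : Mat n :=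
  let x : Fin n → ℝ := fun i => min (a i / rowSum A i) 1
  let A' : Mat n := fun i j => x i * A i j
  let y : Fin n → ℝ := fun j => min (b j / colSum A' j) 1
  let A'' : Mat n := fun i j => A' i j * y j
  let erra : Fin n → ℝ := fun i => a i - rowSum A'' i
  let errb : Fin n → ℝ := fun j => b j - colSum A'' j
  fun i j => A'' i j + if vnorm1 erra = 0 then 0 else erra i * errb j / vnorm1 erra

/-- The coupling decomposition set Π_{a,b}^N. -/
def coupling {n N : ℕ} (a b : Fin n → ℝ) : Set (Fin N → Mat n) :=
  {P | (∀ k i j, 0 ≤ P k i j) ∧ rowSum (∑ k, P k) = a ∧ colSum (∑ k, P k) = b}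

/-- ℓ(π, λ) = Σ_k λ_k ⟨π^k, C^k⟩. -/
def ell {n N : ℕ} (C : Fin N → Mat n) (P : Fin N → Mat n) (lam : Fin N → ℝ) : ℝ :=
  ∑ k, lam k * frob (P k) (C k)

/-- (P, λ) is an ε-optimal solution of the EOT problem (duality-gap ≤ ε). -/
def epsOptimal {n N : ℕ} (C : Fin N → Mat n) (a b : Fin n → ℝ)
    (P : Fin N → Mat n) (lam : Fin N → ℝ) (ε : ℝ) : Prop :=
  P ∈ coupling (N := N) a b ∧ lam ∈ stdSimplex ℝ (Fin N) ∧
    ∀ μ ∈ stdSimplex ℝ (Fin N), ∀ Q ∈ coupling (N := N) a b,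
      ell C P μ - ell C Q lam ≤ ε

/-- The defining properties of the Margins procedure output (a^k, b^k). -/
def MarginsProp {n N : ℕ} (P : Fin N → Mat n) (b : Fin n → ℝ)
    (ak bk : Fin N → Fin n → ℝ) : Prop :=
  (∀ k, ak k = rowSum (P k)) ∧
  (∀ k j, 0 ≤ bk k j) ∧
  (∀ j, ∑ k, bk k j = b j) ∧
  (∀ k, ∑ j, bk k j = ∑ i, ak k i) ∧
  (∀ j k k', 0 ≤ (bk k j - colSum (P k) j) * (bk k' j - colSum (P k') j))

end EOT

/-!
Write `c k = c(π^k)` and `e = b - Σ_k c k` for the surplus of `b` over the aggregated column sums;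
`Σ_j e_j = 0` by the mass balance. At a deficit column (`e_j < 0`) every `c k j` is lowered in
proportion to its share of the column, which keeps it nonnegative because `e_j⁻ ≤ Σ_k c k j`.
The total mass removed from margin `k` is then handed back over the surplus columns in proportion to
`e_j⁺`, which restores the row total. Every correction in column `j` has the sign of `e_j`, so the
triangle inequality `Σ_k |x_k| ≥ |Σ_k x_k|` is an equality column by column.
-/

namespace Finset

variable {R ι : Type*}

theorem sum_abs_eq_abs_sum_of_mul_nonneg [CommRing R] [LinearOrder R] [IsStrictOrderedRing R]
    {s : Finset ι} {x : ι → R} (hx : ∀ i ∈ s, ∀ j ∈ s, 0 ≤ x i * x j) :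
    ∑ i ∈ s, |x i| = |∑ i ∈ s, x i| := by
  by_cases hneg : ∃ i₀ ∈ s, x i₀ < 0
  · obtain ⟨i₀, hi₀, hi₀neg⟩ := hneg
    have hnonpos : ∀ i ∈ s, 0 ≤ -x i := fun i hi =>
      neg_nonneg.mpr (nonpos_of_mul_nonneg_left (hx i hi i₀ hi₀) hi₀neg)
    rw [← abs_neg, ← sum_neg_distrib, abs_sum_of_nonneg hnonpos]
    exact sum_congr rfl fun i hi => abs_of_nonpos (neg_nonneg.mp (hnonpos i hi))
  · simp only [not_exists, not_and, not_lt] at hneg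
    rw [abs_sum_of_nonneg hneg]
    exact sum_congr rfl fun i hi => abs_of_nonneg (hneg i hi)

theorem sum_mul_div_sum_eq [Field R] {s : Finset ι} (w : ι → R) {x : R}
    (hx : ∑ i ∈ s, w i = 0 → x = 0) : ∑ i ∈ s, w i * x / ∑ i ∈ s, w i = x := by
  by_cases hw : ∑ i ∈ s, w i = 0
  · simp [hx hw]
  · rw [← sum_div, ← sum_mul, mul_div_cancel_left₀ _ hw]

theorem sum_posPart_eq_sum_negPart [AddCommGroup R] [LinearOrder R] [IsOrderedAddMonoid R]
    {s : Finset ι} {f : ι → R} (hf : ∑ i ∈ s, f i = 0) : ∑ i ∈ s, (f i)⁺ = ∑ i ∈ s, (f i)⁻ := by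
  rw [← sub_eq_zero, ← sum_sub_distrib, ← hf]
  exact sum_congr rfl fun i _ => posPart_sub_negPart (f i)

end Finset

namespace EOT

section MarginShift

variable {R ι κ : Type*} [Field R] [Fintype ι] (c : ι → κ → R) (b : κ → R)

def surplus (j : κ) : R := b j - ∑ k, c k j

variable {c b}

theorem sum_surplus [Fintype κ] (hbc : ∑ j, b j = ∑ k, ∑ j, c k j) : ∑ j, surplus c b j = 0 := by
  simp only [surplus]
  rw [Finset.sum_sub_distrib, Finset.sum_comm, hbc, sub_self]

variable [LinearOrder R] [IsStrictOrderedRing R]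

theorem negPart_surplus_le (hc : ∀ k j, 0 ≤ c k j) (hb : ∀ j, 0 ≤ b j) (j : κ) :
    (surplus c b j)⁻ ≤ ∑ k, c k j := by
  rw [negPart_def, surplus, neg_sub]
  exact sup_le (by linarith [hb j]) (Finset.sum_nonneg fun k _ => hc k j)

theorem negPart_surplus_eq_zero_of_sum_eq_zero (hc : ∀ k j, 0 ≤ c k j)
    (hb : ∀ j, 0 ≤ b j) {j : κ} (hj : ∑ k, c k j = 0) : (surplus c b j)⁻ = 0 :=
  le_antisymm (hj ▸ negPart_surplus_le hc hb j) (negPart_nonneg _)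

variable (c b) [Fintype κ]

-- With `x / 0 = 0`, a column with `Σ_k c k j = 0` (where `e_j⁻ = 0`) and the case of no surplus at
-- all (where every `deficitLoad` vanishes) need no separate treatment.
def deficitLoad (k : ι) : R := ∑ j, c k j * (surplus c b j)⁻ / ∑ k', c k' j

def marginShift (k : ι) (j : κ) : R :=
  (surplus c b j)⁺ * deficitLoad c b k / ∑ j', (surplus c b j')⁺
    - c k j * (surplus c b j)⁻ / ∑ k', c k' j

variable {c b}

theorem deficitLoad_nonneg (hc : ∀ k j, 0 ≤ c k j) (k : ι) : 0 ≤ deficitLoad c b k :=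
  Finset.sum_nonneg fun j _ => div_nonneg (mul_nonneg (hc k j) (negPart_nonneg _))
    (Finset.sum_nonneg fun k' _ => hc k' j)

theorem sum_deficitLoad (hc : ∀ k j, 0 ≤ c k j) (hb : ∀ j, 0 ≤ b j) :
    ∑ k, deficitLoad c b k = ∑ j, (surplus c b j)⁻ := by
  simp only [deficitLoad]
  rw [Finset.sum_comm]
  exact Finset.sum_congr rfl fun j _ =>
    Finset.sum_mul_div_sum_eq (c · j) (negPart_surplus_eq_zero_of_sum_eq_zero hc hb)

theorem deficitLoad_eq_zero_of_sum_posPart_eq_zero (hbc : ∑ j, b j = ∑ k, ∑ j, c k j)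
    (h : ∑ j, (surplus c b j)⁺ = 0) (k : ι) : deficitLoad c b k = 0 := by
  rw [Finset.sum_posPart_eq_sum_negPart (sum_surplus hbc),
    Finset.sum_eq_zero_iff_of_nonneg fun j _ => negPart_nonneg _] at h
  simp [deficitLoad, h]

theorem sum_marginShift_eq_surplus (hc : ∀ k j, 0 ≤ c k j) (hb : ∀ j, 0 ≤ b j)
    (hbc : ∑ j, b j = ∑ k, ∑ j, c k j) (j : κ) :
    ∑ k, marginShift c b k j = surplus c b j := by
  have hpos : ∑ k, (surplus c b j)⁺ * deficitLoad c b k / ∑ j', (surplus c b j')⁺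
      = (surplus c b j)⁺ := by
    rw [← Finset.sum_div, ← Finset.mul_sum, sum_deficitLoad hc hb,
      ← Finset.sum_posPart_eq_sum_negPart (sum_surplus hbc)]
    by_cases h : ∑ j', (surplus c b j')⁺ = 0
    · rw [(Finset.sum_eq_zero_iff_of_nonneg fun j' _ => posPart_nonneg _).mp h j
        (Finset.mem_univ j), zero_mul, zero_div]
    · exact mul_div_cancel_right₀ _ h
  simp only [marginShift]
  rw [Finset.sum_sub_distrib, hpos,
    Finset.sum_mul_div_sum_eq (c · j) (negPart_surplus_eq_zero_of_sum_eq_zero hc hb),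
    posPart_sub_negPart]

theorem sum_marginShift_eq_zero (hbc : ∑ j, b j = ∑ k, ∑ j, c k j) (k : ι) :
    ∑ j, marginShift c b k j = 0 := by
  simp only [marginShift]
  rw [Finset.sum_sub_distrib, Finset.sum_mul_div_sum_eq (fun j => (surplus c b j)⁺)
    fun h => deficitLoad_eq_zero_of_sum_posPart_eq_zero hbc h k, deficitLoad, sub_self]

theorem add_marginShift_nonneg (hc : ∀ k j, 0 ≤ c k j) (hb : ∀ j, 0 ≤ b j) (k : ι) (j : κ) :
    0 ≤ c k j + marginShift c b k j := by
  have hgain : 0 ≤ (surplus c b j)⁺ * deficitLoad c b k / ∑ j', (surplus c b j')⁺ :=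
    div_nonneg (mul_nonneg (posPart_nonneg _) (deficitLoad_nonneg hc k))
      (Finset.sum_nonneg fun j' _ => posPart_nonneg _)
  have hloss : c k j * (surplus c b j)⁻ / ∑ k', c k' j ≤ c k j := by
    rw [mul_div_assoc]
    exact mul_le_of_le_one_right (hc k j) (div_le_one_of_le₀ (negPart_surplus_le hc hb j)
      (Finset.sum_nonneg fun k' _ => hc k' j))
  rw [marginShift]
  linarith

theorem marginShift_mul_nonneg (hc : ∀ k j, 0 ≤ c k j) (j : κ) (k k' : ι) :
    0 ≤ marginShift c b k j * marginShift c b k' j := by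
  rcases le_total (surplus c b j) 0 with hj | hj
  · have hnonpos : ∀ k, marginShift c b k j ≤ 0 := fun k => by
      rw [marginShift, posPart_eq_zero.mpr hj, zero_mul, zero_div, zero_sub, neg_nonpos]
      exact div_nonneg (mul_nonneg (hc k j) (negPart_nonneg _))
        (Finset.sum_nonneg fun k' _ => hc k' j)
    exact mul_nonneg_of_nonpos_of_nonpos (hnonpos k) (hnonpos k')
  · have hnonneg : ∀ k, 0 ≤ marginShift c b k j := fun k => by
      rw [marginShift, negPart_eq_zero.mpr hj, mul_zero, zero_div, sub_zero]
      exact div_nonneg (mul_nonneg (posPart_nonneg _) (deficitLoad_nonneg hc k))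
        (Finset.sum_nonneg fun j' _ => posPart_nonneg _)
    exact mul_nonneg (hnonneg k) (hnonneg k')

theorem exists_margins_of_sum_eq (hc : ∀ k j, 0 ≤ c k j) (hb : ∀ j, 0 ≤ b j)
    (hbc : ∑ j, b j = ∑ k, ∑ j, c k j) :
    ∃ bk : ι → κ → R,
      (∀ k j, 0 ≤ bk k j) ∧
      (∀ j, ∑ k, bk k j = b j) ∧
      (∀ k, ∑ j, bk k j = ∑ j, c k j) ∧
      (∀ j k k', 0 ≤ (bk k j - c k j) * (bk k' j - c k' j)) := by
  refine ⟨fun k j => c k j + marginShift c b k j, add_marginShift_nonneg hc hb, fun j => ?_,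
    fun k => ?_, fun j k k' => ?_⟩
  · rw [Finset.sum_add_distrib, sum_marginShift_eq_surplus hc hb hbc, surplus, add_sub_cancel]
  · rw [Finset.sum_add_distrib, sum_marginShift_eq_zero hbc, add_zero]
  · simpa only [add_sub_cancel_left] using marginShift_mul_nonneg hc j k k'

end MarginShift

theorem sum_sum_abs_sub_eq_of_mul_nonneg {R ι κ : Type*} [CommRing R] [LinearOrder R]
    [IsStrictOrderedRing R] [Fintype ι] [Fintype κ] {c bk : ι → κ → R} {b : κ → R}
    (hsum : ∀ j, ∑ k, bk k j = b j)
    (hsign : ∀ j k k', 0 ≤ (bk k j - c k j) * (bk k' j - c k' j)) :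
    ∑ k, ∑ j, |bk k j - c k j| = ∑ j, |b j - ∑ k, c k j| := by
  rw [Finset.sum_comm]
  refine Finset.sum_congr rfl fun j _ => ?_
  rw [Finset.sum_abs_eq_abs_sum_of_mul_nonneg fun k _ k' _ => hsign j k k',
    Finset.sum_sub_distrib, hsum]

theorem colSum_sum {n N : ℕ} (P : Fin N → Mat n) (j : Fin n) :
    colSum (∑ k, P k) j = ∑ k, colSum (P k) j := by
  simp only [colSum, Finset.sum_apply]
  exact Finset.sum_comm

theorem sum_colSum {n : ℕ} (A : Mat n) : ∑ j, colSum A j = ∑ i, rowSum A i :=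
  Finset.sum_comm

theorem margins_exist_general
    {n N : ℕ}
    (P : Fin N → Mat n) (hP : ∀ k i j, 0 ≤ P k i j)
    (b : Fin n → ℝ) (hb : ∀ j, 0 < b j)
    (hsum : ∑ j, b j = ∑ k, ∑ i, ∑ j, P k i j)
    (ak : Fin N → Fin n → ℝ) (hak : ∀ k, ak k = rowSum (P k)) :
    (∃ bk : Fin N → Fin n → ℝ,
      (∀ k j, 0 ≤ bk k j) ∧
      (∀ j, ∑ k, bk k j = b j) ∧
      (∀ k, ∑ j, bk k j = ∑ i, ak k i) ∧
      (∀ j k k', 0 ≤ (bk k j - colSum (P k) j) * (bk k' j - colSum (P k') j))) ∧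
    (∀ bk : Fin N → Fin n → ℝ,
      (∀ j, ∑ k, bk k j = b j) →
      (∀ j k k', 0 ≤ (bk k j - colSum (P k) j) * (bk k' j - colSum (P k') j)) →
      (∑ k, vnorm1 (fun j => bk k j - colSum (P k) j))
        = vnorm1 (fun j => b j - colSum (∑ k, P k) j)) := by
  have hc : ∀ k j, 0 ≤ colSum (P k) j := fun k j => Finset.sum_nonneg fun i _ => hP k i j
  have hbc : ∑ j, b j = ∑ k, ∑ j, colSum (P k) j := by
    simp only [hsum, sum_colSum, rowSum]
  refine ⟨?_, fun bk hbk hsign => ?_⟩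
  · obtain ⟨bk, hnonneg, hcol, hrow, hsign⟩ :=
      exists_margins_of_sum_eq hc (fun j => (hb j).le) hbc
    exact ⟨bk, hnonneg, hcol, fun k => by rw [hrow, sum_colSum, hak], hsign⟩
  · simpa only [vnorm1, colSum_sum] using sum_sum_abs_sub_eq_of_mul_nonneg hbk hsign

/-- existence of margins b^1, …, b^N with the four properties,
and the resulting ℓ₁ identity. -/
theorem margins_exist
    {n N : ℕ} (hn : 0 < n) (hN : 0 < N)
    (P : Fin N → Mat n) (hP : ∀ k i j, 0 ≤ P k i j)
    (b : Fin n → ℝ) (hb : ∀ j, 0 < b j)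
    (hsum : ∑ j, b j = ∑ k, ∑ i, ∑ j, P k i j)
    (ak : Fin N → Fin n → ℝ) (hak : ∀ k, ak k = rowSum (P k)) :
    (∃ bk : Fin N → Fin n → ℝ,
      (∀ k j, 0 ≤ bk k j) ∧
      (∀ j, ∑ k, bk k j = b j) ∧
      (∀ k, ∑ j, bk k j = ∑ i, ak k i) ∧
      (∀ j k k', 0 ≤ (bk k j - colSum (P k) j) * (bk k' j - colSum (P k') j))) ∧
    (∀ bk : Fin N → Fin n → ℝ,
      (∀ j, ∑ k, bk k j = b j) →
      (∀ j k k', 0 ≤ (bk k j - colSum (P k) j) * (bk k' j - colSum (P k') j)) →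
      (∑ k, vnorm1 (fun j => bk k j - colSum (P k) j))
        = vnorm1 (fun j => b j - colSum (∑ k, P k) j)) :=
  margins_exist_general P hP b hb hsum ak hak

end EOT

end
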